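/- Consider a triangle with base segment $p_1 p_2$ and apex $p_3$, where the interior angles at $p_1$ and $p_2$ are $\angle_1$ and $\angle_2$ with $\angle_1 + \angle_2 = \gamma < \pi$. Then the height $h$ of the triangle (distance from $p_3$ to the line through $p_1$ and $p_2$) satisfies $h \le \frac{\|p_1 - p_2\|}{2} \tan(\gamma/2)$. -/
import Mathlib


open Real EuclideanGeometry

open RealInnerProductSpace

/-- Height bound for a triangle: if the interior angles at `p₁` and `p₂` are in `(0, π/2)`,
then the distance from the apex `p₃` to the line through `p₁, p₂` is at most
`(‖p₁-p₂‖/2)·tan(γ/2)` where `γ` is the sum of the two base angles. -/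
theorem stmt12 (p₁ p₂ p₃ : EuclideanSpace ℝ (Fin 2)) (h12 : p₁ ≠ p₂)
    (h1 : 0 < ∠ p₃ p₁ p₂) (h1' : ∠ p₃ p₁ p₂ < π / 2)
    (h2 : 0 < ∠ p₃ p₂ p₁) (h2' : ∠ p₃ p₂ p₁ < π / 2) :
    Metric.infDist p₃ (affineSpan ℝ {p₁, p₂} : Set (EuclideanSpace ℝ (Fin 2))) ≤
      dist p₁ p₂ / 2 * Real.tan ((∠ p₃ p₁ p₂ + ∠ p₃ p₂ p₁) / 2) := by
  have hπ := Real.pi_pos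
  set a := ∠ p₃ p₁ p₂ with ha_def
  set b := ∠ p₃ p₂ p₁ with hb_def
  set u : EuclideanSpace ℝ (Fin 2) := p₃ - p₁ with hu
  set v : EuclideanSpace ℝ (Fin 2) := p₂ - p₁ with hv
  set w : EuclideanSpace ℝ (Fin 2) := p₃ - p₂ with hw
  have hvne : v ≠ 0 := sub_ne_zero.mpr (Ne.symm h12)
  have hvnorm : (0:ℝ) < ‖v‖ := norm_pos_iff.mpr hvne
  have hau : a = InnerProductGeometry.angle u v := by
    rw [ha_def, EuclideanGeometry.angle, vsub_eq_sub, vsub_eq_sub]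
  have hbw : b = InnerProductGeometry.angle w (-v) := by
    rw [hb_def, EuclideanGeometry.angle, vsub_eq_sub, vsub_eq_sub, hv, neg_sub]
  -- positivity of sines and cosines
  have hsa : 0 < Real.sin a := Real.sin_pos_of_pos_of_lt_pi h1 (by linarith)
  have hsb : 0 < Real.sin b := Real.sin_pos_of_pos_of_lt_pi h2 (by linarith)
  have hca : 0 < Real.cos a := Real.cos_pos_of_mem_Ioo ⟨by linarith, h1'⟩
  have hcb : 0 < Real.cos b := Real.cos_pos_of_mem_Ioo ⟨by linarith, h2'⟩
  -- inner product facts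
  have hcu : Real.cos a * (‖u‖ * ‖v‖) = ⟪u, v⟫ := by
    rw [hau]; exact InnerProductGeometry.cos_angle_mul_norm_mul_norm u v
  have hcw : Real.cos b * (‖w‖ * ‖v‖) = -⟪w, v⟫ := by
    have := InnerProductGeometry.cos_angle_mul_norm_mul_norm w (-v)
    rw [norm_neg, inner_neg_right] at this
    rw [hbw]; exact this
  have huw : u - w = v := by rw [hu, hw, hv]; abel
  have hinner : ⟪u, v⟫ - ⟪w, v⟫ = ‖v‖ * ‖v‖ := by
    rw [← inner_sub_left, huw, real_inner_self_eq_norm_mul_norm]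
  have hsum : ‖u‖ * Real.cos a + ‖w‖ * Real.cos b = ‖v‖ := by
    have key : (‖u‖ * Real.cos a + ‖w‖ * Real.cos b) * ‖v‖ = ‖v‖ * ‖v‖ := by
      linear_combination hcu + hcw + hinner
    exact mul_right_cancel₀ (ne_of_gt hvnorm) key
  -- the foot of the perpendicular
  set t : ℝ := ⟪u, v⟫ / ‖v‖ ^ 2 with ht
  set q : EuclideanSpace ℝ (Fin 2) := AffineMap.lineMap p₁ p₂ t with hq
  have hqmem : q ∈ (affineSpan ℝ {p₁, p₂} : Set (EuclideanSpace ℝ (Fin 2))) :=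
    AffineMap.lineMap_mem_affineSpan_pair t p₁ p₂
  have hle : Metric.infDist p₃ (affineSpan ℝ {p₁, p₂} : Set (EuclideanSpace ℝ (Fin 2)))
      ≤ dist p₃ q := Metric.infDist_le_dist_of_mem hqmem
  set H : ℝ := dist p₃ q with hH
  have hHnn : 0 ≤ H := dist_nonneg
  have hdist : H = ‖u - t • v‖ := by
    rw [hH, hq, dist_eq_norm, AffineMap.lineMap_apply, vsub_eq_sub, vadd_eq_add,
      sub_add_eq_sub_sub, sub_right_comm, hu, hv]
  have hHsq : H ^ 2 = ‖u‖ ^ 2 - ⟪u, v⟫ ^ 2 / ‖v‖ ^ 2 := by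
    rw [hdist, norm_sub_sq_real, real_inner_smul_right, norm_smul, Real.norm_eq_abs,
      mul_pow, sq_abs, ht]
    field_simp
    ring
  -- H = ‖u‖ sin a
  have hHa : H = ‖u‖ * Real.sin a := by
    have hsq : (‖u‖ * Real.sin a) ^ 2 = H ^ 2 := by
      have hpy := Real.sin_sq_add_cos_sq a
      rw [hHsq]
      have h2 : (‖u‖ * Real.cos a) ^ 2 = ⟪u, v⟫ ^ 2 / ‖v‖ ^ 2 := by
        rw [eq_div_iff (by positivity)]
        linear_combination (Real.cos a * (‖u‖ * ‖v‖) + ⟪u, v⟫) * hcu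
      rw [← h2]
      linear_combination (‖u‖ ^ 2) * hpy
    calc H = Real.sqrt (H ^ 2) := (Real.sqrt_sq hHnn).symm
      _ = Real.sqrt ((‖u‖ * Real.sin a) ^ 2) := by rw [hsq]
      _ = ‖u‖ * Real.sin a := Real.sqrt_sq (by positivity)
  -- H = ‖w‖ sin b
  have hHb : H = ‖w‖ * Real.sin b := by
    have hwsq : ‖w‖ ^ 2 = ‖u‖ ^ 2 - 2 * ⟪u, v⟫ + ‖v‖ ^ 2 := by
      have hwuv : w = u - v := by rw [hu, hv, hw]; abel
      rw [hwuv]; exact norm_sub_sq_real u v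
    have hwi : ⟪w, v⟫ = ⟪u, v⟫ - ‖v‖ * ‖v‖ := by linarith [hinner]
    have hsq : (‖w‖ * Real.sin b) ^ 2 = H ^ 2 := by
      have hpy := Real.sin_sq_add_cos_sq b
      rw [hHsq]
      have h2 : (‖w‖ * Real.cos b) ^ 2 = ⟪w, v⟫ ^ 2 / ‖v‖ ^ 2 := by
        rw [eq_div_iff (by positivity)]
        linear_combination (Real.cos b * (‖w‖ * ‖v‖) - ⟪w, v⟫) * hcw
      have h3 : (‖w‖ * Real.sin b) ^ 2 = ‖w‖ ^ 2 - ⟪w, v⟫ ^ 2 / ‖v‖ ^ 2 := by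
        rw [← h2]
        linear_combination (‖w‖ ^ 2) * hpy
      rw [h3, hwsq, hwi]
      field_simp
      ring
    calc H = Real.sqrt (H ^ 2) := (Real.sqrt_sq hHnn).symm
      _ = Real.sqrt ((‖w‖ * Real.sin b) ^ 2) := by rw [hsq]
      _ = ‖w‖ * Real.sin b := Real.sqrt_sq (by positivity)
  -- the trigonometric part
  set s : ℝ := (a + b) / 2 with hs
  have hs1 : 0 < s := by rw [hs]; linarith
  have hs2 : s < π / 2 := by rw [hs]; linarith
  have hss : 0 < Real.sin s := Real.sin_pos_of_pos_of_lt_pi hs1 (by linarith)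
  have hcs : 0 < Real.cos s := Real.cos_pos_of_mem_Ioo ⟨by linarith, hs2⟩
  have hab2 : a + b = 2 * s := by rw [hs]; ring
  have hsinadd : Real.sin (a + b) = 2 * Real.sin s * Real.cos s := by
    rw [hab2, Real.sin_two_mul]
  have hcosadd : Real.cos (a + b) = Real.cos s ^ 2 - Real.sin s ^ 2 := by
    rw [hab2, two_mul, Real.cos_add]; ring
  have hprod : Real.sin a * Real.sin b ≤ Real.sin s ^ 2 := by
    have hc1 := Real.cos_sub a b
    have hc2 := Real.cos_add a b
    have hc3 : Real.cos (a - b) ≤ 1 := Real.cos_le_one _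
    have hpys := Real.sin_sq_add_cos_sq s
    have e1 : Real.sin a * Real.sin b = (Real.cos (a - b) - Real.cos (a + b)) / 2 := by
      linarith [hc1, hc2]
    have e2 : Real.sin s ^ 2 = (1 - Real.cos (a + b)) / 2 := by
      linarith [hcosadd, hpys]
    linarith [hc3, e1, e2]
  have hkey : ‖v‖ * (Real.sin a * Real.sin b) = H * Real.sin (a + b) := by
    rw [Real.sin_add]
    linear_combination (-(Real.sin a * Real.sin b)) * hsum -
      (Real.cos a * Real.sin b) * hHa - (Real.sin a * Real.cos b) * hHb
  have hfinal : H ≤ ‖v‖ / 2 * Real.tan s := by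
    rw [Real.tan_eq_sin_div_cos]
    have h2 : H * (2 * Real.cos s) ≤ ‖v‖ * Real.sin s := by
      have hk2 : ‖v‖ * (Real.sin a * Real.sin b) = H * (2 * Real.sin s * Real.cos s) := by
        rw [hkey, hsinadd]
      have hle2 : H * (2 * Real.sin s * Real.cos s) ≤ ‖v‖ * Real.sin s ^ 2 := by
        rw [← hk2]
        exact mul_le_mul_of_nonneg_left hprod hvnorm.le
      have hle3 : H * (2 * Real.cos s) * Real.sin s ≤ ‖v‖ * Real.sin s * Real.sin s := by
        have : ‖v‖ * Real.sin s ^ 2 = ‖v‖ * Real.sin s * Real.sin s := by ring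
        linarith [hle2]
      exact le_of_mul_le_mul_right hle3 hss
    rw [show ‖v‖ / 2 * (Real.sin s / Real.cos s) = ‖v‖ * Real.sin s / (2 * Real.cos s) by ring,
      le_div_iff₀ (by positivity)]
    exact h2
  have hdpp : dist p₁ p₂ = ‖v‖ := by rw [dist_eq_norm, hv, norm_sub_rev]
  calc Metric.infDist p₃ (affineSpan ℝ {p₁, p₂} : Set (EuclideanSpace ℝ (Fin 2))) ≤ H := hle
    _ ≤ ‖v‖ / 2 * Real.tan s := hfinal
    _ = dist p₁ p₂ / 2 * Real.tan ((a + b) / 2) := by rw [hdpp, hs]
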